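/- arXiv:1205.5282 — 2 statements merged into one kernel-verified Lean document; each statement's English description precedes it below -/
import Mathlib

section
/- The binary entropy function satisfies |H(x₂) - H(x₁)| ≤ H(x₂ - x₁) for all 0 < x₁ < x₂ < 1. -/
noncomputable def binH (a : ℝ) : ℝ :=
  -(a * Real.logb 2 a) - (1 - a) * Real.logb 2 (1 - a)

lemma binH_eq (a : ℝ) : binH a = Real.binEntropy a / Real.log 2 := by
  simp only [binH, Real.binEntropy, Real.logb, Real.log_inv]
  ring

lemma binEnt_subadd (a b : ℝ) (ha : 0 < a) (hb : 0 < b) (hab : a + b ≤ 1) :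
    Real.binEntropy (a + b) ≤ Real.binEntropy a + Real.binEntropy b := by
  have hC := Real.strictConcave_binEntropy.concaveOn
  have hs : 0 < a + b := by linarith
  have hmem : a + b ∈ Set.Icc (0:ℝ) 1 := ⟨by linarith, hab⟩
  have h0 : (0:ℝ) ∈ Set.Icc (0:ℝ) 1 := by constructor <;> norm_num
  have h1 := hC.2 hmem h0 (div_nonneg ha.le hs.le) (div_nonneg hb.le hs.le)
    (by field_simp)
  have h2 := hC.2 hmem h0 (div_nonneg hb.le hs.le) (div_nonneg ha.le hs.le)
    (by field_simp; ring)
  simp only [smul_eq_mul, mul_zero, add_zero, Real.binEntropy_zero] at h1 h2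
  have e1 : a / (a + b) * (a + b) = a := by field_simp
  have e2 : b / (a + b) * (a + b) = b := by field_simp
  rw [e1] at h1
  rw [e2] at h2
  have hsum : a / (a + b) + b / (a + b) = 1 := by field_simp
  nlinarith [h1, h2, Real.binEntropy_nonneg (by linarith : (0:ℝ) ≤ a + b) hab]

theorem binH_sub_le (x₁ x₂ : ℝ) (h₁ : 0 < x₁) (h₁₂ : x₁ < x₂) (h₂ : x₂ < 1) :
    |binH x₂ - binH x₁| ≤ binH (x₂ - x₁) := by
  have hd : 0 < x₂ - x₁ := by linarith
  have hlog : 0 < Real.log 2 := Real.log_pos (by norm_num)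
  have hA : Real.binEntropy x₂ ≤ Real.binEntropy x₁ + Real.binEntropy (x₂ - x₁) := by
    have := binEnt_subadd x₁ (x₂ - x₁) h₁ hd (by linarith)
    simpa using this
  have hB : Real.binEntropy x₁ ≤ Real.binEntropy x₂ + Real.binEntropy (x₂ - x₁) := by
    have := binEnt_subadd (1 - x₂) (x₂ - x₁) (by linarith) hd (by linarith)
    have e : 1 - x₂ + (x₂ - x₁) = 1 - x₁ := by ring
    rw [e, Real.binEntropy_one_sub, Real.binEntropy_one_sub] at this
    exact this
  rw [binH_eq, binH_eq, binH_eq, div_sub_div_same, abs_div,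
    abs_of_pos hlog, div_le_div_iff_of_pos_right hlog, abs_le]
  constructor <;> linarith
end

section
/- Let p₁, …, p_m be a non-negative unimodal sequence and g : [m] → {-1, 0, 1} such that, restricting to the even indices E = {i : i ≡ 0 mod 2}, the sets g⁻¹(1) ∩ E and g⁻¹(-1) ∩ E are interleaving, and similarly on the odd indices O. Then |Σ_{i=1}^m pᵢ·g(i)| ≤ 2·max_i pᵢ. -/
open Finset

/-- `A` and `B` interleave: between any two elements of one set there is an element of the other. -/
def Interleaving (A B : Finset ℕ) : Prop :=
  (∀ a₁ ∈ A, ∀ a₂ ∈ A, a₁ < a₂ → ∃ b ∈ B, a₁ < b ∧ b < a₂) ∧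
  (∀ b₁ ∈ B, ∀ b₂ ∈ B, b₁ < b₂ → ∃ a ∈ A, b₁ < a ∧ a < b₂)

lemma Interleaving.symm' {A B : Finset ℕ} (h : Interleaving A B) : Interleaving B A :=
  ⟨h.2, h.1⟩

lemma interleaving_erase_top {A B : Finset ℕ} (h : Interleaving A B) (x : ℕ)
    (hx : ∀ b ∈ B, b ≤ x) : Interleaving (A.erase x) B := by
  constructor
  · intro a₁ h₁ a₂ h₂ hlt
    exact h.1 a₁ (mem_of_mem_erase h₁) a₂ (mem_of_mem_erase h₂) hlt
  · intro b₁ h₁ b₂ h₂ hlt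
    obtain ⟨a, ha, ha1, ha2⟩ := h.2 b₁ h₁ b₂ h₂ hlt
    refine ⟨a, mem_erase.mpr ⟨?_, ha⟩, ha1, ha2⟩
    have := hx b₂ h₂
    omega

lemma second_max_mem {A B : Finset ℕ} (h : Interleaving A B) {x : ℕ} (hxA : x ∈ A)
    (hub : ∀ z ∈ A ∪ B, z ≤ x) (hne : (A.erase x ∪ B).Nonempty) :
    (A.erase x ∪ B).max' hne ∈ B := by
  set y := (A.erase x ∪ B).max' hne with hy
  have hymem := Finset.max'_mem _ hne
  rcases mem_union.mp hymem with hyA | hyB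
  · exfalso
    have hyA' : y ∈ A := mem_of_mem_erase hyA
    have hyne : y ≠ x := (mem_erase.mp hyA).1
    have hylex : y ≤ x := hub y (mem_union_left _ hyA')
    have hyx : y < x := lt_of_le_of_ne hylex hyne
    obtain ⟨b, hb, hb1, hb2⟩ := h.1 y hyA' x hxA hyx
    have : b ≤ y := Finset.le_max' _ b (mem_union_right _ hb)
    omega
  · exact hyB

/-- Alternating sum bound on a monotone (increasing towards the top) region. -/
lemma inc_bound (p : ℕ → ℝ) :
    ∀ n : ℕ, ∀ A B : Finset ℕ, (A ∪ B).card ≤ n →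
    Disjoint A B → Interleaving A B →
    (∀ i ∈ A ∪ B, 0 ≤ p i) →
    (∀ i ∈ A ∪ B, ∀ j ∈ A ∪ B, i ≤ j → p i ≤ p j) →
    ∀ x ∈ A, (∀ z ∈ A ∪ B, z ≤ x) →
    0 ≤ (∑ i ∈ A, p i) - (∑ i ∈ B, p i) ∧
    (∑ i ∈ A, p i) - (∑ i ∈ B, p i) ≤ p x := by
  intro n
  induction n with
  | zero =>
    intro A B hcard _ _ _ _ x hxA _
    exfalso
    have : (A ∪ B).card = 0 := Nat.le_zero.mp hcard
    have : A ∪ B = ∅ := Finset.card_eq_zero.mp this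
    have : x ∈ A ∪ B := mem_union_left _ hxA
    simp_all
  | succ n ih =>
    intro A B hcard hd h hnn hmono x hxA hub
    have hxB : x ∉ B := Finset.disjoint_left.mp hd hxA
    have hsumA : ∑ i ∈ A.erase x, p i + p x = ∑ i ∈ A, p i :=
      Finset.sum_erase_add A p hxA
    set A' := A.erase x with hA'
    have hunion_erase : A' ∪ B = (A ∪ B).erase x := by
      rw [Finset.erase_union_distrib, Finset.erase_eq_of_notMem hxB]
    by_cases hE : A' ∪ B = ∅
    · have hA'e : A' = ∅ := by
        have := Finset.union_eq_empty.mp hE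
        exact this.1
      have hBe : B = ∅ := (Finset.union_eq_empty.mp hE).2
      have : (∑ i ∈ A, p i) - (∑ i ∈ B, p i) = p x := by
        rw [hBe]
        simp only [Finset.sum_empty, sub_zero]
        rw [← hsumA, hA'e]
        simp
      rw [this]
      exact ⟨hnn x (mem_union_left _ hxA), le_refl _⟩
    · have hne : (A' ∪ B).Nonempty := Finset.nonempty_iff_ne_empty.mpr hE
      set y := (A' ∪ B).max' hne with hy
      have hyB : y ∈ B := second_max_mem h hxA hub hne
      have hymem : y ∈ A' ∪ B := Finset.max'_mem _ hne
      have hcomm : B ∪ A' = A' ∪ B := Finset.union_comm _ _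
      have hcard' : (B ∪ A').card ≤ n := by
        rw [hcomm, hunion_erase, Finset.card_erase_of_mem (mem_union_left _ hxA)]
        have h1 : 1 ≤ (A ∪ B).card := Finset.card_pos.mpr ⟨x, mem_union_left _ hxA⟩
        omega
      have hd' : Disjoint B A' :=
        (hd.mono_left (Finset.erase_subset _ _)).symm
      have h' : Interleaving B A' :=
        (interleaving_erase_top h x (fun b hb => hub b (mem_union_right _ hb))).symm'
      have hsub : A' ∪ B ⊆ A ∪ B :=
        Finset.union_subset_union_left (Finset.erase_subset _ _)
      have hnn' : ∀ i ∈ B ∪ A', 0 ≤ p i := by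
        intro i hi; rw [hcomm] at hi; exact hnn i (hsub hi)
      have hmono' : ∀ i ∈ B ∪ A', ∀ j ∈ B ∪ A', i ≤ j → p i ≤ p j := by
        intro i hi j hj hij
        rw [hcomm] at hi hj
        exact hmono i (hsub hi) j (hsub hj) hij
      have hub' : ∀ z ∈ B ∪ A', z ≤ y := by
        intro z hz; rw [hcomm] at hz; exact Finset.le_max' _ z hz
      obtain ⟨hT0, hT1⟩ := ih B A' hcard' hd' h' hnn' hmono' y hyB hub'
      have hyx : y ≤ x := hub y (hsub hymem)
      have hpyx : p y ≤ p x := hmono y (hsub hymem) x (mem_union_left _ hxA) hyx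
      constructor
      · nlinarith [hT1, hpyx, hsumA]
      · nlinarith [hT0, hsumA]

/-- Main bound: for a unimodal nonneg sequence and interleaving sets, the signed sum is ≤ M. -/
lemma gen_bound (p : ℕ → ℝ) (t : ℕ) (M : ℝ) (hM : 0 ≤ M) :
    ∀ n : ℕ, ∀ A B : Finset ℕ, (A ∪ B).card ≤ n →
    Disjoint A B → Interleaving A B →
    (∀ i ∈ A ∪ B, 0 ≤ p i) →
    (∀ i ∈ A ∪ B, p i ≤ M) →
    (∀ i ∈ A ∪ B, ∀ j ∈ A ∪ B, i ≤ j → j ≤ t → p i ≤ p j) →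
    (∀ i ∈ A ∪ B, ∀ j ∈ A ∪ B, i ≤ j → t ≤ i → p j ≤ p i) →
    (∑ i ∈ A, p i) - (∑ i ∈ B, p i) ≤ M := by
  intro n
  induction n with
  | zero =>
    intro A B hcard _ _ _ _ _ _
    have : A ∪ B = ∅ := Finset.card_eq_zero.mp (Nat.le_zero.mp hcard)
    have hA : A = ∅ := (Finset.union_eq_empty.mp this).1
    have hB : B = ∅ := (Finset.union_eq_empty.mp this).2
    simp [hA, hB, hM]
  | succ n ih =>
    intro A B hcard hd h hnn hubM hm1 hm2
    by_cases hE : A ∪ B = ∅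
    · have hA : A = ∅ := (Finset.union_eq_empty.mp hE).1
      have hB : B = ∅ := (Finset.union_eq_empty.mp hE).2
      simp [hA, hB, hM]
    · have hne : (A ∪ B).Nonempty := Finset.nonempty_iff_ne_empty.mpr hE
      set x := (A ∪ B).max' hne with hx
      have hxmem : x ∈ A ∪ B := Finset.max'_mem _ hne
      have hub : ∀ z ∈ A ∪ B, z ≤ x := fun z hz => Finset.le_max' _ z hz
      have hcard1 : 1 ≤ (A ∪ B).card := Finset.card_pos.mpr hne
      rcases mem_union.mp hxmem with hxA | hxB
      · -- x ∈ A
        have hxB : x ∉ B := Finset.disjoint_left.mp hd hxA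
        have hsumA : ∑ i ∈ A.erase x, p i + p x = ∑ i ∈ A, p i :=
          Finset.sum_erase_add A p hxA
        set A' := A.erase x with hA'
        have hunion_erase : A' ∪ B = (A ∪ B).erase x := by
          rw [Finset.erase_union_distrib, Finset.erase_eq_of_notMem hxB]
        have hsub : A' ∪ B ⊆ A ∪ B :=
          Finset.union_subset_union_left (Finset.erase_subset _ _)
        by_cases hxt : x ≤ t
        · -- all in the increasing region
          have hmono : ∀ i ∈ A ∪ B, ∀ j ∈ A ∪ B, i ≤ j → p i ≤ p j := by
            intro i hi j hj hij
            exact hm1 i hi j hj hij (le_trans (hub j hj) hxt)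
          have := (inc_bound p (n+1) A B hcard hd h hnn hmono x hxA hub).2
          exact le_trans this (hubM x hxmem)
        · -- x in the decreasing region
          by_cases hE' : A' ∪ B = ∅
          · have hA'e : A' = ∅ := (Finset.union_eq_empty.mp hE').1
            have hBe : B = ∅ := (Finset.union_eq_empty.mp hE').2
            have : (∑ i ∈ A, p i) - (∑ i ∈ B, p i) = p x := by
              rw [hBe]
              simp only [Finset.sum_empty, sub_zero]
              rw [← hsumA, hA'e]
              simp
            rw [this]
            exact hubM x hxmem
          · have hne' : (A' ∪ B).Nonempty := Finset.nonempty_iff_ne_empty.mpr hE'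
            set y := (A' ∪ B).max' hne' with hy
            have hyB : y ∈ B := second_max_mem h hxA hub hne'
            have hymem : y ∈ A' ∪ B := Finset.max'_mem _ hne'
            have hub' : ∀ z ∈ A' ∪ B, z ≤ y := fun z hz => Finset.le_max' _ z hz
            have h1 : Interleaving A' B :=
              interleaving_erase_top h x (fun b hb => hub b (mem_union_right _ hb))
            by_cases hyt : t ≤ y
            · -- remove top two elements
              have hsumB : ∑ i ∈ B.erase y, p i + p y = ∑ i ∈ B, p i :=
                Finset.sum_erase_add B p hyB
              set B' := B.erase y with hB'
              have h2 : Interleaving A' B' := by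
                have := interleaving_erase_top h1.symm' y
                  (fun a ha => hub' a (mem_union_left _ ha))
                exact this.symm'
              have hd' : Disjoint A' B' :=
                (hd.mono_left (Finset.erase_subset _ _)).mono_right
                  (Finset.erase_subset _ _)
              have hsub2 : A' ∪ B' ⊆ A' ∪ B :=
                Finset.union_subset_union_right (Finset.erase_subset _ _)
              have hsub3 : A' ∪ B' ⊆ A ∪ B := fun z hz => hsub (hsub2 hz)
              have hcard' : (A' ∪ B').card ≤ n := by
                have c1 : (A' ∪ B').card ≤ (A' ∪ B).card :=
                  Finset.card_le_card hsub2
                have c2 : (A' ∪ B).card = (A ∪ B).card - 1 := by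
                  rw [hunion_erase, Finset.card_erase_of_mem hxmem]
                omega
              have hrec := ih A' B' hcard' hd' h2
                (fun i hi => hnn i (hsub3 hi))
                (fun i hi => hubM i (hsub3 hi))
                (fun i hi j hj hij hjt => hm1 i (hsub3 hi) j (hsub3 hj) hij hjt)
                (fun i hi j hj hij hti => hm2 i (hsub3 hi) j (hsub3 hj) hij hti)
              have hyx : y ≤ x := hub y (hsub hymem)
              have hpxy : p x ≤ p y :=
                hm2 y (hsub hymem) x hxmem hyx hyt
              nlinarith [hrec, hsumA, hsumB, hpxy]
            · -- rest is in increasing region; use inc_bound on (B, A')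
              have hcomm : B ∪ A' = A' ∪ B := Finset.union_comm _ _
              have hd' : Disjoint B A' :=
                (hd.mono_left (Finset.erase_subset _ _)).symm
              have h' : Interleaving B A' := h1.symm'
              have hcard'' : (B ∪ A').card ≤ n + 1 := by
                rw [hcomm]
                exact le_trans (Finset.card_le_card hsub) hcard
              have hnn' : ∀ i ∈ B ∪ A', 0 ≤ p i := by
                intro i hi; rw [hcomm] at hi; exact hnn i (hsub hi)
              have hmono' : ∀ i ∈ B ∪ A', ∀ j ∈ B ∪ A', i ≤ j → p i ≤ p j := by
                intro i hi j hj hij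
                rw [hcomm] at hi hj
                have hjy : j ≤ y := hub' j hj
                exact hm1 i (hsub hi) j (hsub hj) hij (by omega)
              have hub'' : ∀ z ∈ B ∪ A', z ≤ y := by
                intro z hz; rw [hcomm] at hz; exact hub' z hz
              have := (inc_bound p (n+1) B A' hcard'' hd' h' hnn' hmono' y hyB hub'').1
              have hpx : p x ≤ M := hubM x hxmem
              nlinarith [this, hsumA, hpx]
      · -- x ∈ B : drop it, the sum only decreases
        have hxA : x ∉ A := Finset.disjoint_right.mp hd hxB
        have hsumB : ∑ i ∈ B.erase x, p i + p x = ∑ i ∈ B, p i :=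
          Finset.sum_erase_add B p hxB
        set B' := B.erase x with hB'
        have hunion_erase : A ∪ B' = (A ∪ B).erase x := by
          rw [Finset.erase_union_distrib, Finset.erase_eq_of_notMem hxA]
        have hsub : A ∪ B' ⊆ A ∪ B :=
          Finset.union_subset_union_right (Finset.erase_subset _ _)
        have hcard' : (A ∪ B').card ≤ n := by
          rw [hunion_erase, Finset.card_erase_of_mem hxmem]
          omega
        have h' : Interleaving A B' := by
          have := interleaving_erase_top h.symm' x
            (fun a ha => hub a (mem_union_left _ ha))
          exact this.symm'
        have hd' : Disjoint A B' := hd.mono_right (Finset.erase_subset _ _)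
        have hrec := ih A B' hcard' hd' h'
          (fun i hi => hnn i (hsub hi))
          (fun i hi => hubM i (hsub hi))
          (fun i hi j hj hij hjt => hm1 i (hsub hi) j (hsub hj) hij hjt)
          (fun i hi j hj hij hti => hm2 i (hsub hi) j (hsub hj) hij hti)
        have hpx : 0 ≤ p x := hnn x hxmem
        nlinarith [hrec, hsumB, hpx]

lemma abs_bound (p : ℕ → ℝ) (t : ℕ) (M : ℝ) (hM : 0 ≤ M) (A B : Finset ℕ)
    (hd : Disjoint A B) (h : Interleaving A B)
    (hnn : ∀ i ∈ A ∪ B, 0 ≤ p i) (hubM : ∀ i ∈ A ∪ B, p i ≤ M)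
    (hm1 : ∀ i ∈ A ∪ B, ∀ j ∈ A ∪ B, i ≤ j → j ≤ t → p i ≤ p j)
    (hm2 : ∀ i ∈ A ∪ B, ∀ j ∈ A ∪ B, i ≤ j → t ≤ i → p j ≤ p i) :
    |(∑ i ∈ A, p i) - (∑ i ∈ B, p i)| ≤ M := by
  rw [abs_le]
  have hcomm : B ∪ A = A ∪ B := Finset.union_comm _ _
  constructor
  · have := gen_bound p t M hM (B ∪ A).card B A le_rfl hd.symm h.symm'
      (fun i hi => hnn i (hcomm ▸ hi))
      (fun i hi => hubM i (hcomm ▸ hi))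
      (fun i hi j hj hij hjt => hm1 i (hcomm ▸ hi) j (hcomm ▸ hj) hij hjt)
      (fun i hi j hj hij hti => hm2 i (hcomm ▸ hi) j (hcomm ▸ hj) hij hti)
    linarith
  · exact gen_bound p t M hM (A ∪ B).card A B le_rfl hd h hnn hubM hm1 hm2

theorem unimodal_interleaved_sum (m : ℕ) (hm : 1 ≤ m) (p : ℕ → ℝ) (g : ℕ → ℤ)
    (hp : ∀ i ∈ Finset.Icc 1 m, 0 ≤ p i)
    (huni : ∃ t ∈ Finset.Icc 1 m,
      (∀ i j, 1 ≤ i → i ≤ j → j ≤ t → p i ≤ p j) ∧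
      (∀ i j, t ≤ i → i ≤ j → j ≤ m → p j ≤ p i))
    (hg : ∀ i ∈ Finset.Icc 1 m, g i = -1 ∨ g i = 0 ∨ g i = 1)
    (hE : Interleaving ((Finset.Icc 1 m).filter (fun i => g i = 1 ∧ i % 2 = 0))
                       ((Finset.Icc 1 m).filter (fun i => g i = -1 ∧ i % 2 = 0)))
    (hO : Interleaving ((Finset.Icc 1 m).filter (fun i => g i = 1 ∧ i % 2 = 1))
                       ((Finset.Icc 1 m).filter (fun i => g i = -1 ∧ i % 2 = 1))) :
    |∑ i ∈ Finset.Icc 1 m, p i * (g i : ℝ)| ≤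
      2 * (Finset.Icc 1 m).sup' (Finset.nonempty_Icc.mpr hm) p := by
  obtain ⟨t, ht, hu1, hu2⟩ := huni
  set I := Finset.Icc 1 m with hI
  set M := I.sup' (Finset.nonempty_Icc.mpr hm) p with hMdef
  have hubM : ∀ i ∈ I, p i ≤ M := fun i hi => Finset.le_sup' p hi
  have h1I : (1 : ℕ) ∈ I := by
    rw [hI, Finset.mem_Icc]; omega
  have hM0 : 0 ≤ M := le_trans (hp 1 h1I) (hubM 1 h1I)
  set Ae := I.filter (fun i => g i = 1 ∧ i % 2 = 0) with hAe
  set Be := I.filter (fun i => g i = -1 ∧ i % 2 = 0) with hBe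
  set Ao := I.filter (fun i => g i = 1 ∧ i % 2 = 1) with hAo
  set Bo := I.filter (fun i => g i = -1 ∧ i % 2 = 1) with hBo
  have key : ∑ i ∈ I, p i * (g i : ℝ) =
      ((∑ i ∈ Ae, p i) - ∑ i ∈ Be, p i) + ((∑ i ∈ Ao, p i) - ∑ i ∈ Bo, p i) := by
    rw [hAe, hBe, hAo, hBo]
    simp only [Finset.sum_filter]
    rw [← Finset.sum_sub_distrib, ← Finset.sum_sub_distrib, ← Finset.sum_add_distrib]
    apply Finset.sum_congr rfl
    intro i hi
    rcases hg i hi with h | h | h <;>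
      rcases Nat.mod_two_eq_zero_or_one i with h2 | h2 <;>
      simp [h, h2]
  -- bounds for each part
  have hdisj : ∀ (P Q : ℕ → Prop) [DecidablePred P] [DecidablePred Q],
      (∀ i, ¬(P i ∧ Q i)) → Disjoint (I.filter (fun i => P i)) (I.filter (fun i => Q i)) := by
    intro P Q _ _ hpq
    rw [Finset.disjoint_left]
    intro a ha hb
    exact hpq a ⟨(Finset.mem_filter.mp ha).2, (Finset.mem_filter.mp hb).2⟩
  have hde : Disjoint Ae Be := by
    rw [hAe, hBe]
    apply hdisj
    intro i hi
    omega
  have hdo : Disjoint Ao Bo := by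
    rw [hAo, hBo]
    apply hdisj
    intro i hi
    omega
  have hsubE : Ae ∪ Be ⊆ I :=
    Finset.union_subset (Finset.filter_subset _ _) (Finset.filter_subset _ _)
  have hsubO : Ao ∪ Bo ⊆ I :=
    Finset.union_subset (Finset.filter_subset _ _) (Finset.filter_subset _ _)
  have hIcc : ∀ i ∈ I, 1 ≤ i ∧ i ≤ m := by
    intro i hi; rw [hI, Finset.mem_Icc] at hi; exact hi
  have htm : t ≤ m := (hIcc t ht).2
  have hboundE : |(∑ i ∈ Ae, p i) - (∑ i ∈ Be, p i)| ≤ M := by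
    apply abs_bound p t M hM0 Ae Be hde hE
    · exact fun i hi => hp i (hsubE hi)
    · exact fun i hi => hubM i (hsubE hi)
    · intro i hi j hj hij hjt
      exact hu1 i j (hIcc i (hsubE hi)).1 hij hjt
    · intro i hi j hj hij hti
      exact hu2 i j hti hij (hIcc j (hsubE hj)).2
  have hboundO : |(∑ i ∈ Ao, p i) - (∑ i ∈ Bo, p i)| ≤ M := by
    apply abs_bound p t M hM0 Ao Bo hdo hO
    · exact fun i hi => hp i (hsubO hi)
    · exact fun i hi => hubM i (hsubO hi)
    · intro i hi j hj hij hjt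
      exact hu1 i j (hIcc i (hsubO hi)).1 hij hjt
    · intro i hi j hj hij hti
      exact hu2 i j hti hij (hIcc j (hsubO hj)).2
  rw [key]
  calc |((∑ i ∈ Ae, p i) - ∑ i ∈ Be, p i) + ((∑ i ∈ Ao, p i) - ∑ i ∈ Bo, p i)|
      ≤ |(∑ i ∈ Ae, p i) - ∑ i ∈ Be, p i| + |(∑ i ∈ Ao, p i) - ∑ i ∈ Bo, p i| :=
        abs_add_le _ _
    _ ≤ M + M := add_le_add hboundE hboundO
    _ = 2 * M := by ring
end
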